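/- Let x = (x_1,...,x_{r+1}) ∈ ℝ^{r+1} have exactly s distinct coordinate values, attained at positions organized as x_1 = ... = x_{a_1 - 1} < x_{a_1} = ... = x_{a_2 - 1} < ... < x_{a_{s-1}} = ... = x_{r+1}. Then the columns of the Jacobi matrix of the elementary-symmetric map E at x with indices 1, a_1, ..., a_{s-1} are linearly independent, so the differential of E at x has rank exactly s. -/

import Mathlib

/-!
Column `b` of the Jacobi matrix lists, from the top coefficient down, the coefficients of
`P_b = ∏_{i ≠ b} (X + x_i)`. Hence columns with equal `x_b` coincide, and every column is one of
the chosen ones. For the distinct values `t_i = x (a i)` one has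
`(∏_j (X + t_j)) * P_{a i} = (∏_b (X + x_b)) * ∏_{j ≠ i} (X + t_j)`, so independence of the
chosen columns reduces to that of the polynomials `∏_{j ≠ i} (X + t_j)`, whose combinations are
separated by evaluation at the points `-t_k`.
-/

open Finset

/-- The Jacobi matrix of the elementary symmetric polynomial map
`E(x) = (e₁(x), …, e_{r+1}(x))`: its `(a,b)` entry is
`∂e_(a+1)/∂x_b = e_a(x₁,…,x̂_b,…,x_{r+1})`. -/
noncomputable def jacobiEsymm (r : ℕ) (x : Fin (r + 1) → ℝ) :
    Matrix (Fin (r + 1)) (Fin (r + 1)) ℝ :=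
  fun a b => ∑ s ∈ Finset.powersetCard a.val (Finset.univ.erase b), ∏ k ∈ s, x k

open Polynomial

theorem Finset.prod_erase_eq_prod_erase_of_eq {α M : Type*} [CommMonoid M] [DecidableEq α]
    {s : Finset α} {f : α → M} {b b' : α} (hb : b ∈ s) (hb' : b' ∈ s) (h : f b = f b') :
    ∏ i ∈ s.erase b, f i = ∏ i ∈ s.erase b', f i := by
  obtain rfl | hne := eq_or_ne b b'
  · rfl
  rw [← mul_prod_erase (s.erase b) f (mem_erase.2 ⟨hne.symm, hb'⟩),
    ← mul_prod_erase (s.erase b') f (mem_erase.2 ⟨hne, hb⟩), erase_right_comm, h]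

namespace Polynomial

variable {R : Type*} [CommRing R] [IsDomain R]

theorem linearIndependent_prod_erase_X_add_C {ι : Type*} [Fintype ι] [DecidableEq ι]
    {t : ι → R} (ht : Function.Injective t) :
    LinearIndependent R fun i => ∏ j ∈ univ.erase i, (X + C (t j)) := by
  rw [Fintype.linearIndependent_iff]
  intro c hc k
  have hk := congrArg (eval (-t k)) hc
  rw [eval_finsetSum, sum_eq_single k, eval_zero, eval_smul, eval_prod, smul_eq_mul] at hk
  · refine (mul_eq_zero.1 hk).resolve_right (prod_ne_zero_iff.2 fun j hj => ?_)
    simpa [neg_add_eq_zero, eq_comm] using ht.ne (ne_of_mem_erase hj)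
  · intro i _ hik
    rw [eval_smul, eval_prod, prod_eq_zero (mem_erase.2 ⟨Ne.symm hik, mem_univ k⟩) (by simp),
      smul_zero]
  · simp

theorem linearIndependent_prod_erase_comp_X_add_C {κ ι : Type*} [Fintype κ] [DecidableEq κ]
    [Fintype ι] [DecidableEq ι] (x : κ → R) {a : ι → κ}
    (hxa : Function.Injective (x ∘ a)) :
    LinearIndependent R fun i => ∏ b ∈ univ.erase (a i), (X + C (x b)) := by
  have hP : ∏ b, (X + C (x b)) ≠ 0 := prod_ne_zero_iff.2 fun b _ => X_add_C_ne_zero (x b)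
  have hmul : ∀ i, (∏ j, (X + C (x (a j)))) * ∏ b ∈ univ.erase (a i), (X + C (x b)) =
      (∏ b, (X + C (x b))) * ∏ j ∈ univ.erase i, (X + C (x (a j))) := by
    intro i
    rw [← mul_prod_erase univ _ (mem_univ i), ← mul_prod_erase univ _ (mem_univ (a i))]
    ring
  have hL := linearIndependent_prod_erase_X_add_C hxa
  rw [Fintype.linearIndependent_iff] at hL ⊢
  intro c hc
  refine hL c (mul_right_injective₀ hP ?_)
  calc (∏ b, (X + C (x b))) * ∑ i, c i • ∏ j ∈ univ.erase i, (X + C (x (a j)))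
      = (∏ j, (X + C (x (a j)))) * ∑ i, c i • ∏ b ∈ univ.erase (a i), (X + C (x b)) := by
        simp only [mul_sum, mul_smul_comm, hmul]
    _ = (∏ b, (X + C (x b))) * 0 := by rw [hc, mul_zero, mul_zero]

theorem linearIndependent_coeff_sub_of_natDegree_le {S ι : Type*} [Ring S] [Fintype ι] {n : ℕ}
    {p : ι → S[X]} (hp : LinearIndependent S p) (hdeg : ∀ i, (p i).natDegree ≤ n) :
    LinearIndependent S fun i (k : Fin (n + 1)) => (p i).coeff (n - k) := by
  rw [Fintype.linearIndependent_iff] at hp ⊢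
  intro c hc
  refine hp c (Polynomial.ext fun m => ?_)
  rw [finsetSum_coeff, coeff_zero]
  by_cases hm : m ≤ n
  · simpa [Nat.sub_sub_self hm] using congrFun hc ⟨n - m, by omega⟩
  · simp [coeff_eq_zero_of_natDegree_lt ((hdeg _).trans_lt (not_le.1 hm))]

end Polynomial

theorem Matrix.rank_eq_card_of_linearIndependent_col_comp {m n ι K : Type*} [Fintype m]
    [Fintype n] [Fintype ι] [Field K] (A : Matrix m n K) {a : ι → n}
    (hli : LinearIndependent K (A.col ∘ a)) (hcover : ∀ b, ∃ i, A.col b = A.col (a i)) :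
    A.rank = Fintype.card ι := by
  have hrange : Set.range A.col = Set.range (A.col ∘ a) := by
    refine (Set.range_comp_subset_range a A.col).antisymm' ?_
    rintro _ ⟨b, rfl⟩
    obtain ⟨i, hi⟩ := hcover b
    exact ⟨i, hi.symm⟩
  rw [rank_eq_finrank_span_cols, hrange, finrank_span_eq_card hli]

theorem jacobiEsymm_apply_eq_coeff (r : ℕ) (x : Fin (r + 1) → ℝ) (row b : Fin (r + 1)) :
    jacobiEsymm r x row b = (∏ i ∈ univ.erase b, (X + C (x i))).coeff (r - row) := by
  have hcard : #(univ.erase b) = r := by simp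
  rw [prod_X_add_C_coeff _ _ (by omega), hcard, Nat.sub_sub_self (by omega)]
  rfl

theorem jacobiEsymm_col_eq_of_eq {r : ℕ} {x : Fin (r + 1) → ℝ} {b b' : Fin (r + 1)}
    (h : x b = x b') : (jacobiEsymm r x).col b = (jacobiEsymm r x).col b' := by
  ext row
  simp only [Matrix.col_apply, jacobiEsymm_apply_eq_coeff]
  rw [prod_erase_eq_prod_erase_of_eq (mem_univ b) (mem_univ b') (by rw [h])]

theorem linearIndependent_jacobiEsymm_col_comp {r : ℕ} {ι : Type*} [Fintype ι] [DecidableEq ι]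
    (x : Fin (r + 1) → ℝ) {a : ι → Fin (r + 1)} (hxa : Function.Injective (x ∘ a)) :
    LinearIndependent ℝ ((jacobiEsymm r x).col ∘ a) := by
  have hdeg : ∀ i, (∏ b ∈ univ.erase (a i), (X + C (x b))).natDegree ≤ r := fun i =>
    (natDegree_prod_le _ _).trans (by simp)
  have hcol : (jacobiEsymm r x).col ∘ a =
      fun i (row : Fin (r + 1)) => (∏ b ∈ univ.erase (a i), (X + C (x b))).coeff (r - row) := by
    ext i row
    exact jacobiEsymm_apply_eq_coeff r x row (a i)
  rw [hcol]
  exact linearIndependent_coeff_sub_of_natDegree_le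
    (linearIndependent_prod_erase_comp_X_add_C x hxa) hdeg

theorem jacobiEsymm_rank_eq_general (r s : ℕ) (hs : 1 ≤ s) (x : Fin (r + 1) → ℝ)
    (a : Fin s → Fin (r + 1)) (ha0 : a ⟨0, hs⟩ = 0)
    (hblock : ∀ b : Fin (r + 1), ∀ i : Fin s, a i ≤ b →
      (∀ j : Fin s, a j ≤ b → a j ≤ a i) → x b = x (a i))
    (hjump : StrictMono (fun i : Fin s => x (a i))) :
    LinearIndependent ℝ
        (fun i : Fin s => (fun row : Fin (r + 1) => jacobiEsymm r x row (a i))) ∧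
      (jacobiEsymm r x).rank = s := by
  have hli := linearIndependent_jacobiEsymm_col_comp x hjump.injective
  have hcover : ∀ b, ∃ i, (jacobiEsymm r x).col b = (jacobiEsymm r x).col (a i) := by
    intro b
    obtain ⟨i, hib, hmax⟩ :=
      (univ.filter (a · ≤ b)).exists_max_image a ⟨⟨0, hs⟩, by simp [ha0]⟩
    rw [mem_filter] at hib
    exact ⟨i, jacobiEsymm_col_eq_of_eq (hblock b i hib.2 fun j hj => hmax j (by simpa))⟩
  refine ⟨hli, ?_⟩
  simpa using (jacobiEsymm r x).rank_eq_card_of_linearIndependent_col_comp hli hcover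

/-- Let `x₁ ≤ ⋯ ≤ x_{r+1}` take exactly `s` distinct values, the blocks of equal
coordinates starting at positions `a 0 = 1 < a 1 < ⋯ < a (s-1)` (zero-indexed:
`a 0 = 0`). Then the columns of the Jacobi matrix of the elementary symmetric
map `E` at `x` with indices `a 0, a 1, …, a (s-1)` are linearly independent, and
the differential of `E` at `x` has rank exactly `s`. -/
theorem jacobiEsymm_rank_eq (r s : ℕ) (hs : 1 ≤ s) (x : Fin (r + 1) → ℝ)
    (hx : Monotone x)
    (a : Fin s → Fin (r + 1)) (ha : StrictMono a) (ha0 : a ⟨0, hs⟩ = 0)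
    (hblock : ∀ b : Fin (r + 1), ∀ i : Fin s, a i ≤ b →
      (∀ j : Fin s, a j ≤ b → a j ≤ a i) → x b = x (a i))
    (hjump : StrictMono (fun i : Fin s => x (a i))) :
    LinearIndependent ℝ
        (fun i : Fin s => (fun row : Fin (r + 1) => jacobiEsymm r x row (a i))) ∧
      (jacobiEsymm r x).rank = s :=
  jacobiEsymm_rank_eq_general r s hs x a ha0 hblock hjump
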